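/- arXiv:1909.13549 — 3 statements merged into one kernel-verified Lean document; each statement's English description precedes it below -/
import Mathlib

section
/- There exist constants c > 0 and L₀ > 0 depending only on f such that for every real L ≥ L₀, all integers a, b with 1 ≤ b < a, and every real number y, one has ∫₀^L sin²(π(b/a − P(u)·y)) du ≥ c·L/a², where P(u) denotes the evaluation of the polynomial P at the real number u. -/
/-!
Let `φ u = β - Q(u) y` on `[L/2, L]` and let `V = |y| (Q(L) - Q(L/2))`, the length of the interval
swept by `φ`. For large `L`, both `|Q|` and `L |Q'|` are `O(Q(L) - Q(L/2))` on `[L/2, L]`.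
If `V` is small compared with `δ` (the distance from `β` to `ℤ`, here `1/a`), then `φ` stays
`δ/2` away from `ℤ` and `sin² (π φ) ≥ δ²` pointwise. Otherwise substitute `t = φ u`: as
`|φ'| ≲ V / L`, the integral is `≳ L / V` times the integral of `sin² (π t)` over an interval of
length `V`, which is `≳ min(V, V³)`; with `V ≳ δ` this is `≳ L δ²`.
-/

open Real Set Filter Polynomial MeasureTheory

lemma four_mul_sq_le_sin_pi_mul_sq {x d : ℝ} (hd : 0 ≤ d) (h : ∀ k : ℤ, d ≤ |x - k|) :
    4 * d ^ 2 ≤ sin (π * x) ^ 2 := by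
  set e := x - round x
  have hsin : |sin (π * x)| = |sin (π * e)| := by
    rw [show π * x = π * e + round x * π by simp only [e]; ring, sin_add_int_mul_pi, abs_mul,
      abs_neg_one_zpow, one_mul]
  have hjordan : 2 / π * |π * e| ≤ |sin (π * e)| := by
    refine mul_abs_le_abs_sin ?_
    rw [abs_mul, abs_of_pos pi_pos]
    nlinarith [abs_sub_round x, pi_pos]
  rw [abs_mul, abs_of_pos pi_pos, ← mul_assoc, div_mul_cancel₀ _ pi_ne_zero] at hjordan
  have : 2 * d ≤ |sin (π * x)| := by linarith [h (round x)]
  nlinarith [sq_abs (sin (π * x))]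

lemma sin_sq_div_two_le_sin_sq_add_sin_sq (x d : ℝ) :
    sin d ^ 2 / 2 ≤ sin x ^ 2 + sin (x + d) ^ 2 := by
  have h : sin d = sin (x + d) * cos x - sin x * cos (x + d) := by
    rw [← add_sub_cancel_left x d, sin_sub, add_sub_cancel_left]; ring
  rw [h]
  -- Cauchy–Schwarz: `(p c - q c')² ≤ (p² + q²) (c² + c'²) ≤ 2 (p² + q²)`
  nlinarith [sq_nonneg (sin (x + d) * cos (x + d) + sin x * cos x),
    mul_nonneg (sq_nonneg (sin x)) (sub_nonneg.2 (cos_sq_le_one x)),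
    mul_nonneg (sq_nonneg (sin x)) (sub_nonneg.2 (cos_sq_le_one (x + d))),
    mul_nonneg (sq_nonneg (sin (x + d))) (sub_nonneg.2 (cos_sq_le_one x)),
    mul_nonneg (sq_nonneg (sin (x + d))) (sub_nonneg.2 (cos_sq_le_one (x + d)))]

lemma integral_sin_pi_mul_sq (a b : ℝ) :
    ∫ x in a..b, sin (π * x) ^ 2
      = (b - a) / 2 + (sin (π * a) * cos (π * a) - sin (π * b) * cos (π * b)) / (2 * π) := by
  rw [intervalIntegral.integral_comp_mul_left (fun x => sin x ^ 2) pi_ne_zero, integral_sin_sq,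
    smul_eq_mul]
  field_simp
  ring

lemma div_six_le_integral_sin_pi_mul_sq {a b : ℝ} (h : a + 1 ≤ b) :
    (b - a) / 6 ≤ ∫ x in a..b, sin (π * x) ^ 2 := by
  rw [integral_sin_pi_mul_sq]
  have hsc : ∀ t, |sin t * cos t| ≤ 1 := fun t => by
    rw [abs_mul]; exact mul_le_one₀ (abs_sin_le_one t) (abs_nonneg _) (abs_cos_le_one t)
  have : -(1 / 3) ≤ (sin (π * a) * cos (π * a) - sin (π * b) * cos (π * b)) / (2 * π) := by
    rw [le_div_iff₀ (by positivity)]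
    nlinarith [abs_le.mp (hsc (π * a)), abs_le.mp (hsc (π * b)), pi_gt_three]
  linarith

lemma cube_div_four_le_integral_sin_pi_mul_sq {a b : ℝ} (hab : a ≤ b) (hba : b ≤ a + 1) :
    (b - a) ^ 3 / 4 ≤ ∫ x in a..b, sin (π * x) ^ 2 := by
  set h := (b - a) / 2 with hh
  have hcont : Continuous fun x => sin (π * x) ^ 2 := by fun_prop
  -- pair each point of the left half of `[a, b]` with its translate by `h` in the right half
  have hsplit : ∫ x in a..b, sin (π * x) ^ 2
      = ∫ x in a..a + h, (sin (π * x) ^ 2 + sin (π * x + π * h) ^ 2) := by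
    rw [intervalIntegral.integral_add (hcont.intervalIntegrable _ _)
      ((by fun_prop : Continuous fun x => sin (π * x + π * h) ^ 2).intervalIntegrable _ _),
      ← intervalIntegral.integral_add_adjacent_intervals (hcont.intervalIntegrable a (a + h))
      (hcont.intervalIntegrable _ b)]
    congr 1
    simp_rw [← mul_add]
    rw [intervalIntegral.integral_comp_add_right (fun x => sin (π * x) ^ 2) h]
    congr 1
    ring
  have hjordan : b - a ≤ sin (π * h) := by
    have := le_sin_mul (x := b - a) (by linarith) (by linarith)
    rwa [show π / 2 * (b - a) = π * h by ring] at this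
  calc (b - a) ^ 3 / 4 = (a + h - a) * ((b - a) ^ 2 / 2) := by rw [hh]; ring
    _ ≤ (a + h - a) * (sin (π * h) ^ 2 / 2) := by
        gcongr
        linarith
    _ = ∫ _ in a..a + h, sin (π * h) ^ 2 / 2 := by
        rw [intervalIntegral.integral_const, smul_eq_mul]
    _ ≤ _ := intervalIntegral.integral_mono_on (by linarith) intervalIntegrable_const
          ((by fun_prop : Continuous _).intervalIntegrable _ _)
          fun x _ => sin_sq_div_two_le_sin_sq_add_sin_sq _ _
    _ = _ := hsplit.symm

lemma min_one_sq_mul_div_six_le_abs_integral_sin_pi_mul_sq (a b : ℝ) :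
    min 1 (|b - a| ^ 2) * |b - a| / 6 ≤ |∫ x in a..b, sin (π * x) ^ 2| := by
  wlog hab : a ≤ b generalizing a b
  · rw [intervalIntegral.integral_symm, abs_neg, abs_sub_comm]
    exact this b a (le_of_not_ge hab)
  rw [abs_of_nonneg (sub_nonneg.2 hab),
    abs_of_nonneg (intervalIntegral.integral_nonneg hab fun x _ => sq_nonneg _)]
  rcases le_total (b - a) 1 with h | h
  · rw [min_eq_right (by nlinarith)]
    linarith [cube_div_four_le_integral_sin_pi_mul_sq hab (by linarith : b ≤ a + 1),
      pow_nonneg (sub_nonneg.2 hab) 3]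
  · rw [min_eq_left (by nlinarith), one_mul]
    exact div_six_le_integral_sin_pi_mul_sq (by linarith)

lemma mul_le_integral_sin_sq_of_forall_le_abs_sub_int {φ : ℝ → ℝ} {s t d : ℝ} (hst : s ≤ t)
    (hφ : ContinuousOn φ (Icc s t)) (hd : 0 ≤ d) (h : ∀ u ∈ Icc s t, ∀ k : ℤ, d ≤ |φ u - k|) :
    (t - s) * (4 * d ^ 2) ≤ ∫ u in s..t, sin (π * φ u) ^ 2 := by
  calc (t - s) * (4 * d ^ 2) = ∫ _ in s..t, 4 * d ^ 2 := by
        rw [intervalIntegral.integral_const, smul_eq_mul]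
    _ ≤ _ := intervalIntegral.integral_mono_on hst intervalIntegrable_const
          (ContinuousOn.intervalIntegrable_of_Icc hst (by fun_prop))
          fun u hu => four_mul_sq_le_sin_pi_mul_sq hd (h u hu)

lemma min_one_sq_mul_div_six_le_mul_integral_sin_sq {φ φ' : ℝ → ℝ} {s t M : ℝ} (hst : s ≤ t)
    (hφ : ∀ u ∈ Icc s t, HasDerivAt φ (φ' u) u) (hφ' : ContinuousOn φ' (Icc s t))
    (hM : ∀ u ∈ Icc s t, |φ' u| ≤ M) :
    min 1 (|φ t - φ s| ^ 2) * |φ t - φ s| / 6 ≤ M * ∫ u in s..t, sin (π * φ u) ^ 2 := by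
  rw [← uIcc_of_le hst] at hφ hφ'
  have hφc : ContinuousOn φ (uIcc s t) := fun u hu => (hφ u hu).continuousAt.continuousWithinAt
  calc _ ≤ |∫ x in φ s..φ t, sin (π * x) ^ 2| :=
        min_one_sq_mul_div_six_le_abs_integral_sin_pi_mul_sq _ _
    _ = ‖∫ u in s..t, φ' u • ((fun x => sin (π * x) ^ 2) ∘ φ) u‖ := by
        rw [intervalIntegral.integral_deriv_smul_comp hφ hφ' (by fun_prop), Real.norm_eq_abs]
    _ ≤ ∫ u in s..t, M * sin (π * φ u) ^ 2 := by
        refine intervalIntegral.norm_integral_le_of_norm_le hst (ae_of_all _ fun u hu => ?_)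
          (ContinuousOn.intervalIntegrable (by fun_prop))
        rw [Function.comp_apply, smul_eq_mul, norm_mul, Real.norm_eq_abs, norm_pow,
          Real.norm_eq_abs, sq_abs]
        exact mul_le_mul_of_nonneg_right
          (hM u (Ioc_subset_Icc_self hu)) (sq_nonneg _)
    _ = M * ∫ u in s..t, sin (π * φ u) ^ 2 := intervalIntegral.integral_const_mul _ _

theorem div_le_integral_sin_sq_of_abs_le_mul_abs_sub {g g' : ℝ → ℝ} {s t C β δ : ℝ} (hst : s < t)
    (hC : 1 ≤ C) (hδ : 0 ≤ δ) (hβ : ∀ k : ℤ, δ ≤ |β - k|)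
    (hg : ∀ u ∈ Icc s t, HasDerivAt g (g' u) u) (hg' : ContinuousOn g' (Icc s t))
    (hg_le : ∀ u ∈ Icc s t, |g u| ≤ C * |g t - g s|)
    (hg'_le : ∀ u ∈ Icc s t, (t - s) * |g' u| ≤ C * |g t - g s|) :
    (t - s) * δ ^ 2 / (24 * C ^ 3) ≤ ∫ u in s..t, sin (π * (β - g u)) ^ 2 := by
  set V := |g t - g s|
  have hts : 0 < t - s := sub_pos.2 hst
  have hC3 : 1 ≤ 24 * C ^ 3 := by nlinarith [one_le_pow₀ (n := 3) hC]
  rcases le_or_gt (C * V) (δ / 2) with hsmall | hlarge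
  · have hfar : ∀ u ∈ Icc s t, ∀ k : ℤ, δ / 2 ≤ |β - g u - k| := fun u hu k => by
      have := abs_sub_abs_le_abs_sub (β - k) (g u)
      rw [show β - k - g u = β - g u - k by ring] at this
      linarith [hβ k, hg_le u hu]
    have hφ : ContinuousOn (fun u => β - g u) (Icc s t) :=
      fun u hu => ((hg u hu).const_sub β).continuousAt.continuousWithinAt
    calc (t - s) * δ ^ 2 / (24 * C ^ 3) ≤ (t - s) * δ ^ 2 :=
          div_le_self (by positivity) hC3
      _ = (t - s) * (4 * (δ / 2) ^ 2) := by ring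
      _ ≤ _ := mul_le_integral_sin_sq_of_forall_le_abs_sub_int hst.le hφ (by positivity) hfar
  · -- `β - g u` sweeps an interval of length `V > δ / (2 C)`, at speed at most `C V / (t - s)`
    have hV : 0 < V := by
      by_contra! h
      nlinarith [abs_nonneg (g t - g s)]
    have hsweep := min_one_sq_mul_div_six_le_mul_integral_sin_sq (φ := fun u => β - g u)
      (M := C * V / (t - s)) hst.le (fun u hu => (hg u hu).const_sub β) hg'.neg
      fun u hu => by rw [abs_neg, le_div_iff₀ hts]; linarith [hg'_le u hu]
    rw [show β - g t - (β - g s) = -(g t - g s) by ring, abs_neg] at hsweep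
    have hmin : δ ^ 2 / (4 * C ^ 2) ≤ min 1 (V ^ 2) := by
      have hδC : δ / (2 * C) ≤ 1 / 4 := by
        rw [div_le_iff₀ (by positivity)]
        have : δ ≤ 1 / 2 := (hβ (round β)).trans (abs_sub_round β)
        nlinarith
      have hδV : δ / (2 * C) ≤ V := by
        rw [div_le_iff₀ (by positivity)]
        linarith
      refine le_min ?_ ?_ <;>
        rw [show δ ^ 2 / (4 * C ^ 2) = (δ / (2 * C)) ^ 2 by field_simp; ring]
      · nlinarith [div_nonneg hδ (by positivity : (0 : ℝ) ≤ 2 * C)]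
      · exact pow_le_pow_left₀ (by positivity) hδV 2
    set I := ∫ u in s..t, sin (π * (β - g u)) ^ 2
    have hI : (t - s) * min 1 (V ^ 2) ≤ 6 * C * I := by
      rw [div_mul_eq_mul_div, le_div_iff₀ hts] at hsweep
      nlinarith
    calc (t - s) * δ ^ 2 / (24 * C ^ 3) = (t - s) * (δ ^ 2 / (4 * C ^ 2)) / (6 * C) := by
          field_simp; ring
      _ ≤ (t - s) * min 1 (V ^ 2) / (6 * C) := by gcongr
      _ ≤ I := by rw [div_le_iff₀ (by positivity)]; linarith

namespace Polynomial

lemma eventually_atTop_zero_le_eval {P : ℝ[X]} (hP : 0 ≤ P.leadingCoeff) :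
    ∀ᶠ x in atTop, 0 ≤ P.eval x := by
  rcases eq_or_ne P 0 with rfl | hP0
  · simp
  obtain ⟨z, hz⟩ := (P.eventually_atTop_not_isRoot hP0).exists_forall_of_atTop
  filter_upwards [eventually_ge_atTop z] with x hx
  exact zero_le_eval_of_roots_le_of_leadingCoeff_nonneg
    (fun y hy => (le_of_not_ge fun h => hz y h hy).trans hx) hP

lemma exists_forall_abs_eval_le_eval {P : ℝ[X]} (hP : 0 ≤ P.leadingCoeff) :
    ∃ A, ∀ u x, A ≤ u → u ≤ x → |P.eval u| ≤ P.eval x := by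
  have hP' : 0 ≤ (derivative P).leadingCoeff := by
    rw [leadingCoeff_derivative]; positivity
  obtain ⟨A, hA⟩ := ((eventually_atTop_zero_le_eval hP).and
    (eventually_atTop_zero_le_eval hP')).exists_forall_of_atTop
  have hmono : MonotoneOn (fun x => P.eval x) (Ici A) :=
    monotoneOn_of_deriv_nonneg (convex_Ici A) P.continuous.continuousOn
      P.differentiable.differentiableOn fun x hx => by
        rw [interior_Ici] at hx
        rw [Polynomial.deriv]
        exact (hA x hx.le).2
  refine ⟨A, fun u x hu hux => ?_⟩
  rw [abs_of_nonneg (hA u hu).1]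
  exact hmono hu (hu.trans hux) hux

lemma exists_eventually_eval_le_mul_eval {S T : ℝ[X]} {n : ℕ} (hS : S.natDegree ≤ n)
    (hT : T.natDegree ≤ n) (hTn : 0 < T.coeff n) :
    ∃ C, 0 < C ∧ ∀ᶠ x in atTop, S.eval x ≤ C * T.eval x := by
  set K := (|S.coeff n| + 1) / T.coeff n
  have hKn : 0 < (K • T - S).coeff n := by
    rw [coeff_sub, coeff_smul, smul_eq_mul, div_mul_cancel₀ _ hTn.ne']
    linarith [le_abs_self (S.coeff n)]
  have hdeg : (K • T - S).natDegree ≤ n :=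
    (natDegree_sub_le _ _).trans (max_le ((natDegree_smul_le _ _).trans hT) hS)
  refine ⟨K, by positivity, ?_⟩
  have hlc : 0 ≤ (K • T - S).leadingCoeff := by
    rw [leadingCoeff, natDegree_eq_of_le_of_coeff_ne_zero hdeg hKn.ne']
    exact hKn.le
  filter_upwards [eventually_atTop_zero_le_eval hlc] with x hx
  simpa [sub_nonneg] using hx

theorem exists_abs_eval_le_mul_abs_eval_sub_eval_half {Q : ℝ[X]} (hdeg : 0 < Q.natDegree)
    (hlc : 0 < Q.leadingCoeff) :
    ∃ C, 1 ≤ C ∧ ∀ᶠ L in atTop, ∀ u ∈ Icc (L / 2) L,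
      |Q.eval u| ≤ C * |Q.eval L - Q.eval (L / 2)| ∧
      L * |(derivative Q).eval u| ≤ C * |Q.eval L - Q.eval (L / 2)| := by
  set n := Q.natDegree
  set D := Q - Q.comp (C 2⁻¹ * X)
  have hD : ∀ x, D.eval x = Q.eval x - Q.eval (x / 2) := fun x => by
    simp [D, div_eq_inv_mul]
  have hDdeg : D.natDegree ≤ n := by
    refine (natDegree_sub_le _ _).trans (max_le le_rfl ?_)
    rw [natDegree_comp, natDegree_C_mul_X _ (by norm_num), mul_one]
  have hDn : 0 < D.coeff n := by
    have : (2⁻¹ : ℝ) ^ n < 1 := pow_lt_one₀ (by norm_num) (by norm_num) hdeg.ne'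
    rw [coeff_sub, comp_C_mul_X_coeff, ← mul_one_sub]
    exact mul_pos hlc (sub_pos.2 this)
  have hXQ' : (X * derivative Q).natDegree ≤ n := by
    refine natDegree_mul_le.trans ?_
    rw [natDegree_X, natDegree_derivative]
    omega
  obtain ⟨C₁, hC₁, h₁⟩ := exists_eventually_eval_le_mul_eval le_rfl hDdeg hDn
  obtain ⟨C₂, hC₂, h₂⟩ := exists_eventually_eval_le_mul_eval hXQ' hDdeg hDn
  obtain ⟨A₁, hA₁⟩ := exists_forall_abs_eval_le_eval hlc.le
  obtain ⟨A₂, hA₂⟩ := exists_forall_abs_eval_le_eval (P := derivative Q)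
    (by rw [leadingCoeff_derivative]; positivity)
  set K := max 1 (max C₁ C₂)
  have hK : ∀ C' ≤ K, 0 < C' → ∀ x, C' * D.eval x ≤ K * |D.eval x| := fun C' hC' hC'0 x =>
    (mul_le_mul_of_nonneg_left (le_abs_self _) hC'0.le).trans
      (mul_le_mul_of_nonneg_right hC' (abs_nonneg _))
  refine ⟨K, le_max_left _ _, ?_⟩
  filter_upwards [h₁, h₂, eventually_ge_atTop (2 * max A₁ A₂)] with L hL₁ hL₂ hLA u hu
  have hAu : max A₁ A₂ ≤ u := by linarith [hu.1]
  rw [← hD]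
  constructor
  · calc |Q.eval u| ≤ Q.eval L := hA₁ u L (le_of_max_le_left hAu) hu.2
      _ ≤ C₁ * D.eval L := hL₁
      _ ≤ K * |D.eval L| := hK C₁ (le_max_of_le_right (le_max_left _ _)) hC₁ L
  · have hL : 0 ≤ L := by linarith [hu.1, hu.2]
    calc L * |(derivative Q).eval u| ≤ L * (derivative Q).eval L :=
          mul_le_mul_of_nonneg_left (hA₂ u L (le_of_max_le_right hAu) hu.2) hL
      _ = (X * derivative Q).eval L := by simp
      _ ≤ C₂ * D.eval L := hL₂
      _ ≤ K * |D.eval L| := hK C₂ (le_max_of_le_right (le_max_right _ _)) hC₂ L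

theorem exists_mul_le_integral_sin_sq {Q : ℝ[X]} (hdeg : 0 < Q.natDegree)
    (hlc : 0 < Q.leadingCoeff) :
    ∃ c L₀ : ℝ, 0 < c ∧ 0 < L₀ ∧ ∀ L, L₀ ≤ L → ∀ β y δ : ℝ, 0 ≤ δ → (∀ k : ℤ, δ ≤ |β - k|) →
      c * L * δ ^ 2 ≤ ∫ u in (0 : ℝ)..L, sin (π * (β - Q.eval u * y)) ^ 2 := by
  obtain ⟨C, hC, hQ⟩ := exists_abs_eval_le_mul_abs_eval_sub_eval_half hdeg hlc
  obtain ⟨L₀, hL₀⟩ := (hQ.and (eventually_gt_atTop 0)).exists_forall_of_atTop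
  refine ⟨1 / (48 * C ^ 3), L₀, by positivity, (hL₀ L₀ le_rfl).2, fun L hL β y δ hδ hβ => ?_⟩
  obtain ⟨hbound, hLpos⟩ := hL₀ L hL
  have hhalf := div_le_integral_sin_sq_of_abs_le_mul_abs_sub (g := fun u => Q.eval u * y)
    (g' := fun u => (derivative Q).eval u * y) (half_lt_self hLpos) hC hδ hβ
    (fun u _ => (Q.hasDerivAt u).mul_const y)
    ((Polynomial.continuous _).mul continuous_const).continuousOn
    (fun u hu => by
      simp only [← sub_mul, abs_mul, ← mul_assoc]
      exact mul_le_mul_of_nonneg_right (hbound u hu).1 (abs_nonneg y))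
    (fun u hu => by
      simp only [← sub_mul, abs_mul, ← mul_assoc]
      refine mul_le_mul_of_nonneg_right (le_trans ?_ (hbound u hu).2) (abs_nonneg y)
      exact mul_le_mul_of_nonneg_right (by linarith) (abs_nonneg _))
  calc 1 / (48 * C ^ 3) * L * δ ^ 2 = (L - L / 2) * δ ^ 2 / (24 * C ^ 3) := by
        field_simp; ring
    _ ≤ ∫ u in L / 2..L, sin (π * (β - Q.eval u * y)) ^ 2 := hhalf
    _ ≤ ∫ u in (0 : ℝ)..L, sin (π * (β - Q.eval u * y)) ^ 2 :=
        intervalIntegral.integral_mono_interval (by linarith) (by linarith) le_rfl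
          (ae_of_all _ fun _ => sq_nonneg _)
          (Continuous.intervalIntegrable (by fun_prop) _ _)

end Polynomial

lemma one_div_le_abs_div_sub_intCast {a b : ℤ} (ha : 0 < a) (hab : ¬ a ∣ b) (k : ℤ) :
    1 / (a : ℝ) ≤ |(b : ℝ) / a - k| := by
  have hne : b - k * a ≠ 0 := fun h => hab ⟨k, by linarith⟩
  have h1 : (1 : ℝ) ≤ |((b - k * a : ℤ) : ℝ)| := by exact_mod_cast Int.one_le_abs hne
  have ha' : (0 : ℝ) < a := by exact_mod_cast ha
  rw [show (b : ℝ) / a - k = ((b - k * a : ℤ) : ℝ) / a by push_cast; field_simp, abs_div,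
    abs_of_pos ha']
  exact div_le_div_of_nonneg_right h1 ha'.le

theorem stmt7_general (r : ℕ) (hr : 1 ≤ r) (P : Polynomial ℚ) (hPdeg : P.natDegree = r)
    (hPlc : 0 < P.leadingCoeff) :
    ∃ c L₀ : ℝ, 0 < c ∧ 0 < L₀ ∧
      ∀ L : ℝ, L₀ ≤ L → ∀ a b : ℤ, 1 ≤ b → b < a → ∀ y : ℝ,
        c * L / (a : ℝ) ^ 2 ≤
          ∫ u in (0 : ℝ)..L,
            Real.sin (Real.pi * ((b : ℝ) / (a : ℝ) - Polynomial.aeval u P * y)) ^ 2 := by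
  obtain ⟨c, L₀, hc, hL₀, h⟩ := exists_mul_le_integral_sin_sq (Q := P.map (algebraMap ℚ ℝ))
    (by rw [natDegree_map]; omega) (by rw [leadingCoeff_map, eq_ratCast]; exact_mod_cast hPlc)
  refine ⟨c, L₀, hc, hL₀, fun L hL a b hb hba y => ?_⟩
  have ha : 0 < a := by omega
  have hab : ¬ a ∣ b := fun hdvd => (Int.le_of_dvd (by omega) hdvd).not_gt hba
  have := h L hL (b / a) y (1 / a) (by positivity) (one_div_le_abs_div_sub_intCast ha hab)
  simp only [eval_map_algebraMap] at this
  convert this using 1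
  ring

theorem stmt7 (r : ℕ) (hr : 1 ≤ r) (P : Polynomial ℚ) (hPdeg : P.natDegree = r)
    (hPlc : 0 < P.leadingCoeff)
    (f : ℤ → ℤ) (hfP : ∀ ℓ : ℤ, (f ℓ : ℚ) = P.eval (ℓ : ℚ))
    (hfpos : ∀ ℓ : ℤ, 1 ≤ ℓ → 0 < f ℓ)
    (hfprime : ∀ p : ℕ, p.Prime → ∃ ℓ : ℤ, ¬ ((p : ℤ) ∣ f ℓ)) :
    ∃ c L₀ : ℝ, 0 < c ∧ 0 < L₀ ∧
      ∀ L : ℝ, L₀ ≤ L → ∀ a b : ℤ, 1 ≤ b → b < a → ∀ y : ℝ,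
        c * L / (a : ℝ) ^ 2 ≤
          ∫ u in (0 : ℝ)..L,
            Real.sin (Real.pi * ((b : ℝ) / (a : ℝ) - Polynomial.aeval u P * y)) ^ 2 :=
  stmt7_general r hr P hPdeg hPlc
end

section
/- For every integer r ≥ 1 and every real x > 0, one has −∫₀^∞ log(1 − e^{−u^r x}) du = ζ(1 + 1/r) · Γ(1 + 1/r) · x^{−1/r}, where ζ is the Riemann zeta function and Γ is the Gamma function. -/
/-!
Expanding `-log (1 - y) = ∑ yⁿ⁺¹ / (n + 1)` at `y = exp (-x uᵖ)` and integrating term by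
term (all terms are nonnegative), the `n`-th term contributes
`∫ exp (-(n + 1) x uᵖ) / (n + 1) du = Γ (1 + 1/p) x^(-1/p) (n + 1)^(-(1 + 1/p))`
by the substitution `t = (n + 1) x uᵖ`, and summing over `n` produces `ζ (1 + 1/p)`.
-/

open MeasureTheory Set Real

lemma hasSum_neg_log_one_sub_exp_neg {b : ℝ} (hb : 0 < b) :
    HasSum (fun n : ℕ ↦ exp (-((n + 1) * b)) / (n + 1)) (-log (1 - exp (-b))) := by
  have h : |exp (-b)| < 1 := by
    rw [abs_of_pos (exp_pos _)]
    exact exp_lt_one_iff.mpr (neg_neg_of_pos hb)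
  convert hasSum_pow_div_log_of_abs_lt_one h using 2 with n
  rw [← exp_nat_mul]
  push_cast
  ring_nf

lemma integral_exp_neg_nat_succ_mul_rpow_div {p x : ℝ} (hp : 0 < p) (hx : 0 < x) (n : ℕ) :
    ∫ u in Ioi (0 : ℝ), exp (-((n + 1) * x) * u ^ p) / (n + 1) =
      x ^ (-(1 / p)) * Gamma (1 + 1 / p) * (1 / ((n : ℝ) + 1) ^ (1 + 1 / p)) := by
  have hn : (0 : ℝ) < n + 1 := n.cast_add_one_pos
  rw [integral_div, integral_exp_neg_mul_rpow hp (mul_pos hn hx), mul_rpow hn.le hx.le,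
    neg_div, rpow_neg hn.le, rpow_add hn, rpow_one, add_comm (1 / p)]
  field_simp

lemma integral_neg_log_one_sub_exp_neg_mul_rpow {p x : ℝ} (hp : 0 < p) (hx : 0 < x) :
    ∫ u in Ioi (0 : ℝ), -log (1 - exp (-x * u ^ p)) =
      (∑' n : ℕ, 1 / ((n : ℝ) + 1) ^ (1 + 1 / p)) * Gamma (1 + 1 / p) * x ^ (-(1 / p)) := by
  set F : ℕ → ℝ → ℝ := fun n u ↦ exp (-((n + 1) * x) * u ^ p) / (n + 1)
  have hF_nonneg (n : ℕ) (u : ℝ) : 0 ≤ F n u := by positivity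
  have hF_integrable (n : ℕ) : IntegrableOn (F n) (Ioi 0) := by
    have := integrableOn_rpow_mul_exp_neg_mul_rpow neg_one_lt_zero hp
      (mul_pos n.cast_add_one_pos hx)
    simp_rw [rpow_zero, one_mul] at this
    exact this.div_const _
  have hF_integral (n : ℕ) : ∫ u in Ioi (0 : ℝ), F n u =
      x ^ (-(1 / p)) * Gamma (1 + 1 / p) * (1 / ((n : ℝ) + 1) ^ (1 + 1 / p)) :=
    integral_exp_neg_nat_succ_mul_rpow_div hp hx n
  have hzeta_summable : Summable fun n : ℕ ↦ 1 / ((n : ℝ) + 1) ^ (1 + 1 / p) := by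
    simpa using (summable_nat_add_iff 1).mpr
      (summable_one_div_nat_rpow.mpr (lt_add_of_pos_right 1 (one_div_pos.mpr hp)))
  have hsum : HasSum (fun n ↦ ∫ u in Ioi (0 : ℝ), F n u)
      (∫ u in Ioi (0 : ℝ), ∑' n, F n u) := by
    refine hasSum_integral_of_summable_integral_norm hF_integrable ?_
    simp_rw [norm_of_nonneg (hF_nonneg _ _), hF_integral]
    exact hzeta_summable.mul_left _
  have hlog : ∀ u ∈ Ioi (0 : ℝ), ∑' n, F n u = -log (1 - exp (-x * u ^ p)) := by
    intro u hu
    have hb : 0 < x * u ^ p := mul_pos hx (rpow_pos_of_pos hu p)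
    rw [neg_mul, ← (hasSum_neg_log_one_sub_exp_neg hb).tsum_eq]
    simp only [F, neg_mul, mul_assoc]
  rw [← setIntegral_congr_fun measurableSet_Ioi hlog, ← hsum.tsum_eq]
  simp_rw [hF_integral, tsum_mul_left]
  ring

lemma riemannZeta_ofReal_eq_tsum {s : ℝ} (hs : 1 < s) :
    riemannZeta s = ((∑' n : ℕ, 1 / ((n : ℝ) + 1) ^ s : ℝ) : ℂ) := by
  rw [zeta_eq_tsum_one_div_nat_add_one_cpow (by simpa), Complex.ofReal_tsum]
  congr with n
  rw [Complex.ofReal_div, Complex.ofReal_cpow n.cast_add_one_pos.le]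
  push_cast
  rfl

theorem stmt12 (r : ℕ) (hr : 1 ≤ r) (x : ℝ) (hx : 0 < x) :
    (-(∫ u in Set.Ioi (0 : ℝ), Real.log (1 - Real.exp (-(u ^ r) * x))) : ℂ) =
      riemannZeta (1 + 1 / (r : ℂ)) * Complex.Gamma (1 + 1 / (r : ℂ)) *
        (x : ℂ) ^ (-(1 / (r : ℂ))) := by
  have hr_pos : (0 : ℝ) < r := by exact_mod_cast hr
  have hs : (1 + 1 / r : ℂ) = ((1 + 1 / r : ℝ) : ℂ) := by push_cast; rfl
  have hintegrand (u : ℝ) :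
      log (1 - exp (-(u ^ r) * x)) = log (1 - exp (-x * u ^ (r : ℝ))) := by
    rw [rpow_natCast, neg_mul, neg_mul, mul_comm]
  rw [← Complex.ofReal_neg, ← integral_neg]
  simp_rw [hintegrand]
  rw [integral_neg_log_one_sub_exp_neg_mul_rpow hr_pos hx, hs,
    riemannZeta_ofReal_eq_tsum (lt_add_of_pos_right 1 (one_div_pos.mpr hr_pos)),
    Complex.Gamma_ofReal]
  push_cast [Complex.ofReal_cpow hx.le]
  rfl
end

section
/- Let a_r > 0 denote the leading coefficient of P. There exist constants C > 0 and x₀ > 0 such that for all x ∈ (0, x₀), | log G_f(x) − ζ(1 + 1/r)·Γ(1 + 1/r)·(a_r x)^{−1/r} | ≤ C · x^{−1/(2r)}, where log G_f(x) := −Σ_{n ≥ 1} log(1 − e^{−f(n)x}). -/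
/-!
Expanding each logarithm, `log G_f(x) = ∑_{k ≥ 1} Θ(k x) / k` with `Θ(t) = ∑_{n ≥ 1} e^{-f(n) t}`.
By the integral test, `∑_{n ≥ 1} e^{-b n^r}` lies within `1` of `Γ(1 + 1/r) b^{-1/r}`; since
`f(n) - a_r n^r = O(n^{r-1})`, replacing `f(n)` by `a_r n^r` in `Θ(t)` costs `O(1)`. Hence
`Θ(t) = Γ(1 + 1/r) (a_r t)^{-1/r} + O(1)`, while for `t ≥ 1` both sides are `O(t^{-1/r})`, so that
`Θ(t) = Γ(1 + 1/r) (a_r t)^{-1/r} + O(t^{-1/(2r)})` uniformly in `t > 0`. Summing over `k`, the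
main terms add up to `ζ(1 + 1/r) Γ(1 + 1/r) (a_r x)^{-1/r}` and the errors to
`ζ(1 + 1/(2r)) O(x^{-1/(2r)})`.
-/

open Real MeasureTheory Set Filter

lemma abs_exp_neg_sub_exp_neg_le {m u v : ℝ} (hu : m ≤ u) (hv : m ≤ v) :
    |exp (-u) - exp (-v)| ≤ |u - v| * exp (-m) := by
  wlog huv : u ≤ v generalizing u v
  · rw [abs_sub_comm, abs_sub_comm u]
    exact this hv hu (le_of_not_ge huv)
  have hexp : exp (-v) = exp (-u) * exp (-(v - u)) := by rw [← exp_add]; ring_nf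
  have hlin : 1 - (v - u) ≤ exp (-(v - u)) := by linarith [add_one_le_exp (-(v - u))]
  rw [abs_of_nonneg (sub_nonneg.mpr (exp_le_exp.mpr (neg_le_neg huv))), abs_sub_comm,
    abs_of_nonneg (sub_nonneg.mpr huv), hexp]
  calc exp (-u) - exp (-u) * exp (-(v - u)) ≤ (v - u) * exp (-u) := by
        nlinarith [exp_pos (-u)]
    _ ≤ (v - u) * exp (-m) := by gcongr

lemma rpow_sub_one_mul_exp_neg_mul_rpow_le {p l u : ℝ} (hp : 1 ≤ p) (hl : 0 < l)
    (hu : 0 ≤ u) :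
    u ^ (p - 1) * exp (-l * u ^ p) ≤ l ^ (-(p - 1) / p) := by
  rw [neg_mul]
  set y := l * u ^ p
  have hy : 0 ≤ y := by positivity
  have hs : (p - 1) / p ≤ 1 := by rw [div_le_one (by linarith)]; linarith
  have hys : y ^ ((p - 1) / p) ≤ exp y := by
    refine le_trans ?_ (add_one_le_exp y)
    rcases le_total y 1 with hy1 | hy1
    · linarith [rpow_le_one hy hy1 (div_nonneg (by linarith) (by linarith) : 0 ≤ (p - 1) / p)]
    · linarith [rpow_le_self_of_one_le hy1 hs]
  have hyp : y ^ ((p - 1) / p) = l ^ ((p - 1) / p) * u ^ (p - 1) := by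
    rw [mul_rpow hl.le (rpow_nonneg hu _), ← rpow_mul hu]
    congr 2; field_simp
  set L := l ^ ((p - 1) / p)
  have hL : 0 < L := rpow_pos_of_pos hl _
  rw [neg_div, rpow_neg hl.le]
  calc u ^ (p - 1) * exp (-y) = y ^ ((p - 1) / p) * exp (-y) / L := by
        rw [hyp]; field_simp
    _ ≤ exp y * exp (-y) / L := by gcongr
    _ = L⁻¹ := by rw [← exp_add, add_neg_cancel, exp_zero, one_div]

section ExpRpowSum

variable {p b : ℝ}

lemma antitoneOn_exp_neg_mul_rpow (hp : 0 < p) (hb : 0 < b) :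
    AntitoneOn (fun u : ℝ => exp (-b * u ^ p)) (Ici 0) := fun u hu v _ huv =>
  exp_le_exp.mpr <| by
    have := rpow_le_rpow hu huv hp.le
    nlinarith

lemma integrableOn_exp_neg_mul_rpow (hp : 0 < p) (hb : 0 < b) :
    IntegrableOn (fun u : ℝ => exp (-b * u ^ p)) (Ioi 0) := by
  simpa using integrableOn_rpow_mul_exp_neg_mul_rpow neg_one_lt_zero hp hb

lemma summable_exp_neg_mul_rpow (hp : 0 < p) (hb : 0 < b) :
    Summable fun n : ℕ => exp (-b * ((n : ℝ) + 1) ^ p) := by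
  have := (antitoneOn_exp_neg_mul_rpow hp hb).summable_of_integrableOn_Ioi_zero
    (integrableOn_exp_neg_mul_rpow hp hb) fun _ _ => (exp_pos _).le
  exact_mod_cast (summable_nat_add_iff 1).mpr this

lemma tsum_exp_neg_mul_rpow_le (hp : 0 < p) (hb : 0 < b) :
    ∑' n : ℕ, exp (-b * ((n : ℝ) + 1) ^ p) ≤ Gamma (1 / p + 1) * b ^ (-1 / p) := by
  rw [mul_comm, ← integral_exp_neg_mul_rpow hp hb]
  exact_mod_cast (antitoneOn_exp_neg_mul_rpow hp hb).tsum_add_one_le_integral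
    (integrableOn_exp_neg_mul_rpow hp hb) fun _ _ => (exp_pos _).le

lemma abs_tsum_exp_neg_mul_rpow_sub_le_one (hp : 0 < p) (hb : 0 < b) :
    |∑' n : ℕ, exp (-b * ((n : ℝ) + 1) ^ p) - Gamma (1 / p + 1) * b ^ (-1 / p)| ≤ 1 := by
  have hsum : Summable fun n : ℕ => exp (-b * (n : ℝ) ^ p) :=
    (summable_nat_add_iff 1).mp (by exact_mod_cast summable_exp_neg_mul_rpow hp hb)
  have hlow := (antitoneOn_exp_neg_mul_rpow hp hb).integral_le_tsum hsum fun _ _ => (exp_pos _).le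
  rw [integral_exp_neg_mul_rpow hp hb, hsum.tsum_eq_zero_add] at hlow
  simp only [Nat.cast_zero, zero_rpow hp.ne', mul_zero, exp_zero, Nat.cast_add, Nat.cast_one]
    at hlow
  rw [abs_le]
  constructor <;> linarith [tsum_exp_neg_mul_rpow_le hp hb]

end ExpRpowSum

lemma summable_of_abs_sub_le {f g h : ℕ → ℝ} (hg : Summable g) (hh : Summable h)
    (hfg : ∀ n, |f n - g n| ≤ h n) : Summable f := by
  simpa using (hh.of_norm_bounded (f := fun n => f n - g n) hfg).add hg

lemma abs_tsum_sub_tsum_le {f g h : ℕ → ℝ} (hg : Summable g) (hh : Summable h)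
    (hfg : ∀ n, |f n - g n| ≤ h n) : |∑' n, f n - ∑' n, g n| ≤ ∑' n, h n := by
  rw [← (summable_of_abs_sub_le hg hh hfg).tsum_sub hg]
  exact tsum_of_norm_bounded (f := fun n => f n - g n) hh.hasSum hfg

section ExpSumAsymptotics

variable {p a c B t : ℝ} {F : ℕ → ℝ}

lemma exp_neg_mul_le_of_rpow_le (hlow : ∀ n : ℕ, c * ((n : ℝ) + 1) ^ p ≤ F n) (ht : 0 ≤ t)
    (n : ℕ) : exp (-F n * t) ≤ exp (-(c * t) * ((n : ℝ) + 1) ^ p) :=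
  exp_le_exp.mpr <| by nlinarith [mul_le_mul_of_nonneg_right (hlow n) ht]

lemma summable_exp_neg_mul_of_rpow_le (hp : 0 < p) (hc : 0 < c)
    (hlow : ∀ n : ℕ, c * ((n : ℝ) + 1) ^ p ≤ F n) (ht : 0 < t) :
    Summable fun n => exp (-F n * t) :=
  (summable_exp_neg_mul_rpow hp (mul_pos hc ht)).of_nonneg_of_le (fun _ => (exp_pos _).le)
    (exp_neg_mul_le_of_rpow_le hlow ht.le)

lemma tsum_exp_neg_mul_le_of_rpow_le (hp : 0 < p) (hc : 0 < c)
    (hlow : ∀ n : ℕ, c * ((n : ℝ) + 1) ^ p ≤ F n) (ht : 0 < t) :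
    ∑' n, exp (-F n * t) ≤ Gamma (1 / p + 1) * (c * t) ^ (-1 / p) :=
  ((summable_exp_neg_mul_of_rpow_le hp hc hlow ht).tsum_le_tsum
    (exp_neg_mul_le_of_rpow_le hlow ht.le) (summable_exp_neg_mul_rpow hp (mul_pos hc ht))).trans
    (tsum_exp_neg_mul_rpow_le hp (mul_pos hc ht))

/-- Half of the decay `exp (-c t n ^ p)` absorbs the factor `n ^ (p - 1)` of the error term. -/
lemma abs_exp_neg_mul_sub_exp_neg_mul_rpow_le (hp : 1 ≤ p) (hc : 0 < c) (hca : c ≤ a)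
    (hlow : ∀ n : ℕ, c * ((n : ℝ) + 1) ^ p ≤ F n)
    (hclose : ∀ n : ℕ, |F n - a * ((n : ℝ) + 1) ^ p| ≤ B * ((n : ℝ) + 1) ^ (p - 1))
    (ht : 0 < t) (n : ℕ) :
    |exp (-F n * t) - exp (-(a * t) * ((n : ℝ) + 1) ^ p)| ≤
      t * B * (c * t / 2) ^ (-(p - 1) / p) * exp (-(c * t / 2) * ((n : ℝ) + 1) ^ p) := by
  set N : ℝ := (n : ℝ) + 1
  have hN : 0 ≤ N ^ p := by positivity
  have hsplit : exp (-(c * t * N ^ p)) =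
      exp (-(c * t / 2) * N ^ p) * exp (-(c * t / 2) * N ^ p) := by
    rw [← exp_add]; ring_nf
  have hmax := rpow_sub_one_mul_exp_neg_mul_rpow_le hp (by positivity : 0 < c * t / 2)
    (by positivity : 0 ≤ N)
  rw [neg_mul, neg_mul]
  calc |exp (-(F n * t)) - exp (-(a * t * N ^ p))|
      ≤ |F n * t - a * t * N ^ p| * exp (-(c * t * N ^ p)) :=
        abs_exp_neg_sub_exp_neg_le (by nlinarith [mul_le_mul_of_nonneg_right (hlow n) ht.le])
          (by nlinarith [mul_le_mul_of_nonneg_right (mul_le_mul_of_nonneg_right hca ht.le) hN])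
    _ = t * |F n - a * N ^ p| * exp (-(c * t * N ^ p)) := by
        rw [show F n * t - a * t * N ^ p = t * (F n - a * N ^ p) by ring, abs_mul,
          abs_of_pos ht]
    _ ≤ t * (B * N ^ (p - 1)) * exp (-(c * t * N ^ p)) := by gcongr; exact hclose n
    _ = t * B * (N ^ (p - 1) * exp (-(c * t / 2) * N ^ p)) * exp (-(c * t / 2) * N ^ p) := by
        rw [hsplit]; ring
    _ ≤ t * B * (c * t / 2) ^ (-(p - 1) / p) * exp (-(c * t / 2) * N ^ p) := by
        have hB : 0 ≤ B :=
          nonneg_of_mul_nonneg_left ((abs_nonneg _).trans (hclose n)) (by positivity)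
        gcongr

lemma abs_tsum_exp_neg_mul_sub_le_const (hp : 1 ≤ p) (hc : 0 < c) (hca : c ≤ a)
    (hlow : ∀ n : ℕ, c * ((n : ℝ) + 1) ^ p ≤ F n)
    (hclose : ∀ n : ℕ, |F n - a * ((n : ℝ) + 1) ^ p| ≤ B * ((n : ℝ) + 1) ^ (p - 1))
    (ht : 0 < t) :
    |∑' n, exp (-F n * t) - Gamma (1 / p + 1) * (a * t) ^ (-1 / p)| ≤
      2 * B * Gamma (1 / p + 1) / c + 1 := by
  have hp0 : 0 < p := by linarith
  have hat : 0 < a * t := mul_pos (hc.trans_le hca) ht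
  have hb : 0 < c * t / 2 := by positivity
  have hB : 0 ≤ B := nonneg_of_mul_nonneg_left ((abs_nonneg _).trans (hclose 0)) (by positivity)
  have hsum := abs_tsum_sub_tsum_le (summable_exp_neg_mul_rpow hp0 hat)
    ((summable_exp_neg_mul_rpow hp0 hb).mul_left (t * B * (c * t / 2) ^ (-(p - 1) / p)))
    (abs_exp_neg_mul_sub_exp_neg_mul_rpow_le hp hc hca hlow hclose ht)
  have herr : t * B * (c * t / 2) ^ (-(p - 1) / p) *
      ∑' n : ℕ, exp (-(c * t / 2) * ((n : ℝ) + 1) ^ p) ≤ 2 * B * Gamma (1 / p + 1) / c :=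
    calc _ ≤ t * B * (c * t / 2) ^ (-(p - 1) / p) *
            (Gamma (1 / p + 1) * (c * t / 2) ^ (-1 / p)) := by
          gcongr; exact tsum_exp_neg_mul_rpow_le hp0 hb
      _ = t * B * Gamma (1 / p + 1) * (c * t / 2) ^ (-(p - 1) / p + -1 / p) := by
          rw [rpow_add hb]; ring
      _ = 2 * B * Gamma (1 / p + 1) / c := by
          rw [show -(p - 1) / p + -1 / p = -1 by field_simp; ring, rpow_neg_one]
          field_simp
  rw [tsum_mul_left] at hsum
  calc _ ≤ _ := abs_sub_le _ (∑' n : ℕ, exp (-(a * t) * ((n : ℝ) + 1) ^ p)) _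
    _ ≤ _ := add_le_add (hsum.trans herr) (abs_tsum_exp_neg_mul_rpow_sub_le_one hp0 hat)

lemma exists_abs_tsum_exp_neg_mul_sub_le (hp : 1 ≤ p) (hc : 0 < c) (hca : c ≤ a)
    (hlow : ∀ n : ℕ, c * ((n : ℝ) + 1) ^ p ≤ F n)
    (hclose : ∀ n : ℕ, |F n - a * ((n : ℝ) + 1) ^ p| ≤ B * ((n : ℝ) + 1) ^ (p - 1)) :
    ∃ C, 0 ≤ C ∧ ∀ t, 0 < t →
      |∑' n, exp (-F n * t) - Gamma (1 / p + 1) * (a * t) ^ (-1 / p)| ≤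
        C * t ^ (-1 / (2 * p)) := by
  have hp0 : 0 < p := by linarith
  have ha : 0 < a := hc.trans_le hca
  have hB : 0 ≤ B := nonneg_of_mul_nonneg_left ((abs_nonneg _).trans (hclose 0)) (by positivity)
  set C₁ := 2 * B * Gamma (1 / p + 1) / c + 1
  set C₂ := Gamma (1 / p + 1) * (c ^ (-1 / p) + a ^ (-1 / p))
  have hC₁ : 0 ≤ C₁ := by positivity
  have hC₂ : 0 ≤ C₂ := by positivity
  refine ⟨C₁ + C₂, by positivity, fun t ht => ?_⟩
  rcases le_total t 1 with ht1 | ht1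
  · have h1 : 1 ≤ t ^ (-1 / (2 * p)) :=
      one_le_rpow_of_pos_of_le_one_of_nonpos ht ht1
        (div_nonpos_of_nonpos_of_nonneg (by norm_num) (by positivity))
    calc _ ≤ C₁ := abs_tsum_exp_neg_mul_sub_le_const hp hc hca hlow hclose ht
      _ ≤ (C₁ + C₂) * 1 := by linarith
      _ ≤ (C₁ + C₂) * t ^ (-1 / (2 * p)) := by gcongr
  · have hexp : t ^ (-1 / p) ≤ t ^ (-1 / (2 * p)) := by
      apply rpow_le_rpow_of_exponent_le ht1
      rw [div_le_div_iff₀ hp0 (by positivity)]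
      linarith
    have hΘ := tsum_exp_neg_mul_le_of_rpow_le hp0 hc hlow ht
    rw [mul_rpow hc.le ht.le] at hΘ
    have hM : Gamma (1 / p + 1) * (a * t) ^ (-1 / p) =
        Gamma (1 / p + 1) * a ^ (-1 / p) * t ^ (-1 / p) := by
      rw [mul_rpow ha.le ht.le]; ring
    calc _ ≤ C₂ * t ^ (-1 / p) := by
          refine abs_sub_le_iff.mpr ⟨?_, ?_⟩
          · nlinarith [show 0 ≤ Gamma (1 / p + 1) * (a * t) ^ (-1 / p) by positivity]
          · nlinarith [show 0 ≤ ∑' n, exp (-F n * t) from tsum_nonneg fun n => (exp_pos _).le,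
              show 0 ≤ Gamma (1 / p + 1) * c ^ (-1 / p) * t ^ (-1 / p) by positivity]
      _ ≤ (C₁ + C₂) * t ^ (-1 / (2 * p)) := by
          gcongr
          linarith

lemma exp_neg_mul_pow_succ (s x : ℝ) (k : ℕ) :
    exp (-s * x) ^ (k + 1) = exp (-s * (((k : ℝ) + 1) * x)) := by
  rw [← exp_nat_mul]; push_cast; ring_nf

lemma neg_tsum_log_one_sub_exp_eq {F : ℕ → ℝ} {δ x : ℝ} (hδ : 0 < δ) (hF : ∀ n, δ ≤ F n)
    (hx : 0 < x) (hsum : Summable fun n => exp (-F n * x)) :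
    -∑' n, log (1 - exp (-F n * x)) =
      ∑' k : ℕ, (∑' n, exp (-F n * (((k : ℝ) + 1) * x))) / ((k : ℝ) + 1) := by
  set g : ℕ → ℕ → ℝ := fun n k => exp (-F n * (((k : ℝ) + 1) * x)) / ((k : ℝ) + 1)
  have hlog : ∀ n, HasSum (g n) (-log (1 - exp (-F n * x))) := by
    intro n
    have hq : |exp (-F n * x)| < 1 := by
      rw [abs_of_pos (exp_pos _), exp_lt_one_iff]
      nlinarith [hF n]
    simpa only [exp_neg_mul_pow_succ] using hasSum_pow_div_log_of_abs_lt_one hq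
  have hg : Summable (Function.uncurry g) := by
    have hgeom : Summable fun k : ℕ => exp (-δ * x) ^ k :=
      summable_geometric_of_lt_one (exp_pos _).le (exp_lt_one_iff.mpr (by nlinarith))
    refine (hsum.mul_of_nonneg hgeom (fun _ => (exp_pos _).le) fun _ => by positivity)
      |>.of_nonneg_of_le (fun _ => div_nonneg (exp_pos _).le (by positivity)) fun ⟨n, k⟩ => ?_
    calc g n k ≤ exp (-F n * (((k : ℝ) + 1) * x)) :=
          div_le_self (exp_pos _).le (by linarith [k.cast_nonneg (α := ℝ)])
      _ ≤ exp (-F n * x) * exp (-δ * x) ^ k := by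
          rw [← exp_nat_mul, ← exp_add, exp_le_exp]
          nlinarith [hF n, mul_le_mul_of_nonneg_left (hF n) (mul_nonneg k.cast_nonneg hx.le)]
  calc -∑' n, log (1 - exp (-F n * x)) = ∑' n, ∑' k, g n k := by
        rw [← tsum_neg]; exact tsum_congr fun n => (hlog n).tsum_eq.symm
    _ = ∑' k, ∑' n, g n k := hg.tsum_comm.symm
    _ = _ := tsum_congr fun k => tsum_div_const

lemma summable_nat_add_one_rpow_neg {s : ℝ} (hs : 1 < s) :
    Summable fun k : ℕ => ((k : ℝ) + 1) ^ (-s) := by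
  have := (summable_nat_add_iff 1).mpr (summable_nat_rpow.mpr (neg_lt_neg hs))
  exact_mod_cast this

lemma mul_rpow_neg_div_self {K x : ℝ} (hK : 0 < K) (hx : 0 ≤ x) (s : ℝ) :
    (K * x) ^ (-s) / K = x ^ (-s) * K ^ (-(1 + s)) := by
  rw [mul_rpow hK.le hx, neg_add, rpow_add hK, rpow_neg_one]
  ring

lemma abs_tsum_div_sub_le {Θ : ℝ → ℝ} {A C s q x : ℝ} (hs : 0 < s) (hq : 0 < q) (hx : 0 < x)
    (hΘ : ∀ t, 0 < t → |Θ t - A * t ^ (-s)| ≤ C * t ^ (-q)) :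
    |∑' k : ℕ, Θ (((k : ℝ) + 1) * x) / ((k : ℝ) + 1) -
        A * x ^ (-s) * ∑' k : ℕ, ((k : ℝ) + 1) ^ (-(1 + s))| ≤
      C * x ^ (-q) * ∑' k : ℕ, ((k : ℝ) + 1) ^ (-(1 + q)) := by
  rw [← tsum_mul_left, ← tsum_mul_left]
  refine abs_tsum_sub_tsum_le ((summable_nat_add_one_rpow_neg (by linarith)).mul_left _)
    ((summable_nat_add_one_rpow_neg (by linarith)).mul_left _) fun k => ?_
  set K : ℝ := (k : ℝ) + 1
  have hK : 0 < K := by positivity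
  calc |Θ (K * x) / K - A * x ^ (-s) * K ^ (-(1 + s))|
      = |(Θ (K * x) - A * (K * x) ^ (-s)) / K| := by
        rw [sub_div, mul_div_assoc, mul_rpow_neg_div_self hK hx.le, mul_assoc]
    _ = |Θ (K * x) - A * (K * x) ^ (-s)| / K := by rw [abs_div, abs_of_pos hK]
    _ ≤ C * (K * x) ^ (-q) / K := by gcongr; exact hΘ _ (by positivity)
    _ = C * x ^ (-q) * K ^ (-(1 + q)) := by
        rw [mul_div_assoc, mul_rpow_neg_div_self hK hx.le, mul_assoc]

lemma exists_pos_le_of_eventually_le {u : ℕ → ℝ} {c₀ : ℝ} (hu : ∀ n, 0 < u n)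
    (hc₀ : 0 < c₀) (hev : ∀ᶠ n in atTop, c₀ ≤ u n) : ∃ c, 0 < c ∧ c ≤ c₀ ∧ ∀ n, c ≤ u n := by
  obtain ⟨N, hN⟩ := eventually_atTop.mp hev
  obtain ⟨m, -, hm⟩ := (Finset.range (N + 1)).exists_min_image u ⟨0, by simp⟩
  refine ⟨min c₀ (u m), lt_min hc₀ (hu m), min_le_left _ _, fun n => ?_⟩
  rcases lt_or_ge n (N + 1) with hn | hn
  · exact (min_le_right _ _).trans (hm n (Finset.mem_range.mpr hn))
  · exact (min_le_left _ _).trans (hN n (by omega))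

lemma exists_pos_mul_rpow_le {p a B : ℝ} {F : ℕ → ℝ} (ha : 0 < a) (hpos : ∀ n, 0 < F n)
    (hclose : ∀ n : ℕ, |F n - a * ((n : ℝ) + 1) ^ p| ≤ B * ((n : ℝ) + 1) ^ (p - 1)) :
    ∃ c, 0 < c ∧ c ≤ a ∧ ∀ n : ℕ, c * ((n : ℝ) + 1) ^ p ≤ F n := by
  have hev : ∀ᶠ n : ℕ in atTop, a / 2 ≤ F n / ((n : ℝ) + 1) ^ p := by
    filter_upwards [(tendsto_natCast_atTop_atTop (R := ℝ)).eventually_ge_atTop (2 * B / a)]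
      with n hn
    have hN : (0 : ℝ) < (n : ℝ) + 1 := by positivity
    have hBN : B * ((n : ℝ) + 1) ^ (p - 1) ≤ a / 2 * ((n : ℝ) + 1) ^ p := by
      rw [rpow_sub_one hN.ne', ← mul_div_assoc, div_le_iff₀ hN, mul_assoc]
      have : 2 * B ≤ a * ((n : ℝ) + 1) := by rw [div_le_iff₀ ha] at hn; linarith
      nlinarith [rpow_pos_of_pos hN p]
    rw [le_div_iff₀ (rpow_pos_of_pos hN p)]
    linarith [(abs_le.mp (hclose n)).1]
  obtain ⟨c, hc, hca, hcu⟩ := exists_pos_le_of_eventually_le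
    (fun n => div_pos (hpos n) (by positivity)) (half_pos ha) hev
  exact ⟨c, hc, by linarith, fun n => (le_div_iff₀ (by positivity)).mp (hcu n)⟩

lemma abs_eval_sub_leadingCoeff_mul_pow_le (P : Polynomial ℝ) {x : ℝ} (hx : 1 ≤ x) :
    |P.eval x - P.leadingCoeff * x ^ P.natDegree| ≤
      (∑ i ∈ Finset.range P.natDegree, |P.coeff i|) * x ^ (P.natDegree - 1) := by
  rw [Polynomial.eval_eq_sum_range, Finset.sum_range_succ, Polynomial.coeff_natDegree,
    add_sub_cancel_right, Finset.sum_mul]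
  refine (Finset.abs_sum_le_sum_abs _ _).trans (Finset.sum_le_sum fun i hi => ?_)
  rw [abs_mul, abs_of_nonneg (by positivity : (0 : ℝ) ≤ x ^ i)]
  gcongr
  have := Finset.mem_range.mp hi
  omega

lemma abs_eval_sub_leadingCoeff_mul_rpow_le (P : Polynomial ℝ) (hP : 1 ≤ P.natDegree) {x : ℝ}
    (hx : 1 ≤ x) :
    |P.eval x - P.leadingCoeff * x ^ (P.natDegree : ℝ)| ≤
      (∑ i ∈ Finset.range P.natDegree, |P.coeff i|) * x ^ ((P.natDegree : ℝ) - 1) := by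
  rw [← Nat.cast_one, ← Nat.cast_sub hP, rpow_natCast, rpow_natCast]
  exact abs_eval_sub_leadingCoeff_mul_pow_le P hx

lemma exists_abs_intCast_sub_leadingCoeff_mul_rpow_le {r : ℕ} (hr : 1 ≤ r)
    {P : Polynomial ℚ} (hPdeg : P.natDegree = r) {f : ℤ → ℤ}
    (hfP : ∀ ℓ : ℤ, (f ℓ : ℚ) = P.eval (ℓ : ℚ)) :
    ∃ B, ∀ n : ℕ, |(f ((n : ℤ) + 1) : ℝ) - (P.leadingCoeff : ℝ) * ((n : ℝ) + 1) ^ (r : ℝ)| ≤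
      B * ((n : ℝ) + 1) ^ ((r : ℝ) - 1) := by
  set Q := P.map (Rat.castHom ℝ)
  have hQ : Q.natDegree = r := (Polynomial.natDegree_map _).trans hPdeg
  refine ⟨∑ i ∈ Finset.range r, |Q.coeff i|, fun n => ?_⟩
  have hf : (f ((n : ℤ) + 1) : ℝ) = Q.eval ((n : ℝ) + 1) := by
    have := Polynomial.eval₂_at_apply (Rat.castHom ℝ) (((n : ℤ) + 1 : ℤ) : ℚ) (p := P)
    rw [← hfP] at this
    simpa [Q, Polynomial.eval_map] using this.symm
  have := abs_eval_sub_leadingCoeff_mul_rpow_le Q (hQ ▸ hr) (x := (n : ℝ) + 1) (by simp)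
  rwa [hQ, Polynomial.leadingCoeff_map, ← hf] at this

lemma riemannZeta_ofReal_eq_tsum_s13 {σ : ℝ} (hσ : 1 < σ) :
    riemannZeta σ = ((∑' k : ℕ, ((k : ℝ) + 1) ^ (-σ) : ℝ) : ℂ) := by
  rw [zeta_eq_tsum_one_div_nat_add_one_cpow (by simpa using hσ), Complex.ofReal_tsum]
  refine tsum_congr fun k => ?_
  rw [rpow_neg (by positivity), Complex.ofReal_inv, Complex.ofReal_cpow (by positivity),
    one_div]
  push_cast
  rfl

lemma norm_ofReal_sub_riemannZeta_mul_Gamma_mul_cpow (S b s : ℝ) (hb : 0 ≤ b) (hs : 0 < s) :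
    ‖(S : ℂ) - riemannZeta (1 + s) * Complex.Gamma (1 + s) * (b : ℂ) ^ (-(s : ℂ))‖ =
      |S - (∑' k : ℕ, ((k : ℝ) + 1) ^ (-(1 + s))) * Gamma (s + 1) * b ^ (-s)| := by
  rw [← Complex.ofReal_one, ← Complex.ofReal_add, riemannZeta_ofReal_eq_tsum_s13 (by linarith),
    Complex.Gamma_ofReal, ← Complex.ofReal_neg, ← Complex.ofReal_cpow hb, add_comm 1 s,
    ← Complex.ofReal_mul, ← Complex.ofReal_mul, ← Complex.ofReal_sub, Complex.norm_real,
    norm_eq_abs]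

theorem stmt13_general (r : ℕ) (hr : 1 ≤ r) (P : Polynomial ℚ) (hPdeg : P.natDegree = r)
    (hPlc : 0 < P.leadingCoeff)
    (f : ℤ → ℤ) (hfP : ∀ ℓ : ℤ, (f ℓ : ℚ) = P.eval (ℓ : ℚ))
    (hfpos : ∀ ℓ : ℤ, 1 ≤ ℓ → 0 < f ℓ) :
    ∃ C x₀ : ℝ, 0 < C ∧ 0 < x₀ ∧
      ∀ x : ℝ, 0 < x → x < x₀ →
        ‖((-∑' n : ℕ, Real.log (1 - Real.exp (-(f ((n : ℤ) + 1) : ℝ) * x)) : ℝ) : ℂ) -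
            riemannZeta (1 + 1 / (r : ℂ)) * Complex.Gamma (1 + 1 / (r : ℂ)) *
              (((P.leadingCoeff : ℝ) * x : ℝ) : ℂ) ^ (-(1 / (r : ℂ)))‖ ≤
          C * x ^ (-(1 : ℝ) / (2 * r)) := by
  set a : ℝ := (P.leadingCoeff : ℝ)
  set p : ℝ := (r : ℝ)
  set F : ℕ → ℝ := fun n => f ((n : ℤ) + 1)
  have hp : 1 ≤ p := Nat.one_le_cast.mpr hr
  have ha : 0 < a := Rat.cast_pos.mpr hPlc
  obtain ⟨B, hclose⟩ := exists_abs_intCast_sub_leadingCoeff_mul_rpow_le hr hPdeg hfP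
  obtain ⟨c, hc, hca, hlow⟩ :=
    exists_pos_mul_rpow_le ha (fun n => Int.cast_pos.mpr (hfpos _ (by omega))) hclose
  have hcF : ∀ n, c ≤ F n := fun n =>
    (le_mul_of_one_le_right hc.le (one_le_rpow (by simp) (by positivity))).trans (hlow n)
  obtain ⟨C, hC, hΘ⟩ := exists_abs_tsum_exp_neg_mul_sub_le hp hc hca hlow hclose
  have hΘ' : ∀ t, 0 < t → |∑' n, exp (-F n * t) - Gamma (1 / p + 1) * a ^ (-(1 / p)) *
      t ^ (-(1 / p))| ≤ C * t ^ (-(1 / (2 * p))) := fun t ht => by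
    simpa only [neg_div, mul_rpow ha.le ht.le, mul_assoc] using hΘ t ht
  set Z := ∑' k : ℕ, ((k : ℝ) + 1) ^ (-(1 + 1 / (2 * p)))
  refine ⟨C * Z + 1, 1, by positivity, one_pos, fun x hx _ => ?_⟩
  have hsum := abs_tsum_div_sub_le (by positivity) (by positivity) hx hΘ'
  rw [← neg_tsum_log_one_sub_exp_eq hc hcF hx
    (summable_exp_neg_mul_of_rpow_le (by positivity) hc hlow hx)] at hsum
  rw [show 1 / (r : ℂ) = ((1 / p : ℝ) : ℂ) by push_cast; rfl,
    norm_ofReal_sub_riemannZeta_mul_Gamma_mul_cpow _ _ _ (by positivity) (by positivity),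
    mul_rpow ha.le hx.le, neg_div]
  calc _ ≤ C * x ^ (-(1 / (2 * p))) * Z := by convert hsum using 3; ring
    _ ≤ (C * Z + 1) * x ^ (-(1 / (2 * p))) := by
        nlinarith [rpow_pos_of_pos hx (-(1 / (2 * p)))]

theorem stmt13 (r : ℕ) (hr : 1 ≤ r) (P : Polynomial ℚ) (hPdeg : P.natDegree = r)
    (hPlc : 0 < P.leadingCoeff)
    (f : ℤ → ℤ) (hfP : ∀ ℓ : ℤ, (f ℓ : ℚ) = P.eval (ℓ : ℚ))
    (hfpos : ∀ ℓ : ℤ, 1 ≤ ℓ → 0 < f ℓ)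
    (hfprime : ∀ p : ℕ, p.Prime → ∃ ℓ : ℤ, ¬ ((p : ℤ) ∣ f ℓ)) :
    ∃ C x₀ : ℝ, 0 < C ∧ 0 < x₀ ∧
      ∀ x : ℝ, 0 < x → x < x₀ →
        ‖((-∑' n : ℕ, Real.log (1 - Real.exp (-(f ((n : ℤ) + 1) : ℝ) * x)) : ℝ) : ℂ) -
            riemannZeta (1 + 1 / (r : ℂ)) * Complex.Gamma (1 + 1 / (r : ℂ)) *
              (((P.leadingCoeff : ℝ) * x : ℝ) : ℂ) ^ (-(1 / (r : ℂ)))‖ ≤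
          C * x ^ (-(1 : ℝ) / (2 * r)) :=
  stmt13_general r hr P hPdeg hPlc f hfP hfpos
end ExpSumAsymptotics
end
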